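/- arXiv:2003.14264 — 3 statements merged into one kernel-verified Lean document; each statement's English description precedes it below -/
import Mathlib

section
/- In a finite-dimensional normed vector space E ≅ ℝ^n, a Borel set A is shy if and only if A has Lebesgue measure zero. -/
/-!
If every translate of `B` is `ν`-null, then for a Haar measure `μ` Fubini applied to
`{(v, x) | v + x ∈ B}` under `μ × ν` gives `μ B * ν univ = 0`, so `μ B = 0` once `ν ≠ 0`
(restricting the test measure to the compact set `K` makes it finite and nonzero). Conversely,
a Haar-null set is shy with the Haar measure itself as test measure, by translation invariance.
-/

open MeasureTheory

/-- A Borel set `A` is shy if there is a Borel measure, positive and finite on some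
compact set, giving zero measure to every translate of `A`. -/
def IsShyBorel {E : Type*} [NormedAddCommGroup E] [NormedSpace ℝ E] [MeasurableSpace E]
    (A : Set E) : Prop :=
  MeasurableSet A ∧ ∃ μ : Measure E,
    (∃ K : Set E, IsCompact K ∧ 0 < μ K ∧ μ K < ⊤) ∧
    ∀ v : E, μ ((fun x => v + x) '' A) = 0

/-- A set is shy if it is contained in a shy Borel set. -/
def IsShy {E : Type*} [NormedAddCommGroup E] [NormedSpace ℝ E] [MeasurableSpace E]
    (A : Set E) : Prop :=
  ∃ B : Set E, A ⊆ B ∧ IsShyBorel B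

theorem measure_eq_zero_of_translates_null {G : Type*} [AddCommGroup G] [MeasurableSpace G]
    [MeasurableAdd₂ G] (μ : Measure G) [SFinite μ] [μ.IsAddLeftInvariant]
    {ν : Measure G} [SFinite ν] (hν : ν ≠ 0) {B : Set G} (hB : MeasurableSet B)
    (hνB : ∀ v, ν ((fun x => v + x) '' B) = 0) : μ B = 0 := by
  set S : Set (G × G) := (fun p => p.1 + p.2) ⁻¹' B
  have hS : MeasurableSet S := measurable_add hB
  have hS_eq_zero : μ.prod ν S = 0 := by
    rw [Measure.prod_apply hS]
    refine lintegral_eq_zero_of_ae_eq_zero (Filter.Eventually.of_forall fun v => ?_)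
    simpa [S, Set.preimage, Set.image_add_left] using hνB (-v)
  have hS_eq_mul : μ.prod ν S = μ B * ν Set.univ := by
    rw [Measure.prod_apply_symm hS]
    have hslice (x : G) : μ ((fun v => (v, x)) ⁻¹' S) = μ B := by
      simpa [S, Set.preimage, add_comm] using measure_preimage_add μ x B
    simp only [hslice, lintegral_const]
  have hνuniv : ν Set.univ ≠ 0 := Measure.measure_univ_ne_zero.mpr hν
  simpa [hνuniv] using hS_eq_mul.symm.trans hS_eq_zero

theorem IsShyBorel.measure_eq_zero {E : Type*} [NormedAddCommGroup E] [NormedSpace ℝ E]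
    [MeasurableSpace E] [MeasurableAdd₂ E] (μ : Measure E) [SFinite μ] [μ.IsAddLeftInvariant]
    {A : Set E} (hA : IsShyBorel A) : μ A = 0 := by
  obtain ⟨hAm, ν, ⟨K, -, hK_pos, hK_fin⟩, hνA⟩ := hA
  have : IsFiniteMeasure (ν.restrict K) := isFiniteMeasure_restrict.mpr hK_fin.ne
  refine measure_eq_zero_of_translates_null μ (ν := ν.restrict K)
    (Measure.restrict_eq_zero.not.mpr hK_pos.ne') hAm fun v => ?_
  exact nonpos_iff_eq_zero.mp ((Measure.restrict_apply_le K _).trans (hνA v).le)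

theorem isShyBorel_of_measure_eq_zero {E : Type*} [NormedAddCommGroup E] [NormedSpace ℝ E]
    [MeasurableSpace E] [BorelSpace E] [ProperSpace E] (μ : Measure E) [μ.IsAddHaarMeasure]
    {A : Set E} (hA : MeasurableSet A) (hμA : μ A = 0) : IsShyBorel A := by
  refine ⟨hA, μ, ⟨Metric.closedBall 0 1, isCompact_closedBall 0 1,
    Metric.measure_closedBall_pos μ 0 one_pos, measure_closedBall_lt_top⟩, fun v => ?_⟩
  rwa [Set.image_add_left, measure_preimage_add]

/-- In a finite-dimensional normed real vector space, a Borel set is shy if and only if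
it has zero Lebesgue (Haar) measure. -/
theorem stmt2 {E : Type*} [NormedAddCommGroup E] [NormedSpace ℝ E] [FiniteDimensional ℝ E]
    [MeasurableSpace E] [BorelSpace E] (μ : Measure E) [μ.IsAddHaarMeasure]
    (A : Set E) (hA : MeasurableSet A) :
    IsShy A ↔ μ A = 0 :=
  ⟨fun ⟨_, hAB, hB⟩ => measure_mono_null hAB (hB.measure_eq_zero μ),
    fun hμA => ⟨A, subset_rfl, isShyBorel_of_measure_eq_zero μ hA hμA⟩⟩
end

section
/- Let γ > 1/2, ν ∈ (0,1) with γ(1+ν) > 1 and A ∈ C^γ([0,T]; C^ν(ℝ^d;ℝ^d)). Then any solution θ ∈ C^γ([0,T];ℝ^d) of the nonlinear Young differential equation θ_t = θ_0 + ∫₀^t A(ds, θ_s) satisfies [θ]_{C^γ} ≤ C (1 + ‖A‖²_{C^γ C^ν}) and ‖θ‖_{C⁰} ≤ C (1 + |θ_0| + ‖A‖²_{C^γ C^ν}), for a constant C = C(γ, ν, T). -/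
def IsPartition {n : ℕ} (s t : ℝ) (τ : Fin (n + 1) → ℝ) : Prop :=
  Monotone τ ∧ τ 0 = s ∧ τ (Fin.last n) = t

def MeshLE {n : ℕ} (τ : Fin (n + 1) → ℝ) (δ : ℝ) : Prop :=
  ∀ i : Fin n, τ i.succ - τ i.castSucc ≤ δ

noncomputable def riemannSum {d : ℕ} (A : ℝ → (Fin d → ℝ) → Fin d → ℝ)
    (θ : ℝ → Fin d → ℝ) {n : ℕ} (τ : Fin (n + 1) → ℝ) : Fin d → ℝ :=
  ∑ i : Fin n, (A (τ i.succ) (θ (τ i.castSucc)) - A (τ i.castSucc) (θ (τ i.castSucc)))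

def IsNYIntegral {d : ℕ} (A : ℝ → (Fin d → ℝ) → Fin d → ℝ) (θ : ℝ → Fin d → ℝ)
    (s t : ℝ) (I : Fin d → ℝ) : Prop :=
  ∀ ε > (0:ℝ), ∃ δ > (0:ℝ), ∀ (n : ℕ) (τ : Fin (n + 1) → ℝ),
    IsPartition s t τ → MeshLE τ δ → ‖riemannSum A θ τ - I‖ ≤ ε

/-!
Write `α = γ(1+ν) > 1` and `Ξ_{a,b} = A_b(θ_a) - A_a(θ_a)`. The defect
`Ξ_{a,b} - Ξ_{a,m} - Ξ_{m,b}` is a joint space-time increment of `A` and is of order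
`‖A‖ [θ]^ν (b-a)^α`, so comparing Riemann sums along successive dyadic partitions (the sewing
argument) gives `|θ_v - θ_u - Ξ_{u,v}| ≤ κ ‖A‖ [θ]^ν (v-u)^α`. On windows of length `l` the best
Hölder constant `K` of `θ` therefore satisfies `K ≤ ‖A‖ + κ ‖A‖ l^{γν} K^ν`; once
`κ ‖A‖ l^{γν} ≤ 1/2` this forces `K ≤ 2‖A‖ + 1`. Splitting `[s,t]` into `N ≈ T/l` equal pieces
costs a factor `N^{1-γ} ≲ ‖A‖^{(1-γ)/(γν)} ≤ 1 + ‖A‖`, because `γ(1+ν) > 1` means `1-γ < γν`.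
-/

open Set

noncomputable def gridPoint (u v : ℝ) (n i : ℕ) : ℝ := u + (v - u) * i / n

section Grid

variable (u v : ℝ)

lemma gridPoint_zero (n : ℕ) : gridPoint u v n 0 = u := by simp [gridPoint]

lemma gridPoint_self {n : ℕ} (hn : n ≠ 0) : gridPoint u v n n = v := by
  simp [gridPoint, hn]

lemma gridPoint_succ_sub (n i : ℕ) :
    gridPoint u v n (i + 1) - gridPoint u v n i = (v - u) / n := by
  simp only [gridPoint]; push_cast; ring

lemma gridPoint_two_mul (n i : ℕ) : gridPoint u v (2 * n) (2 * i) = gridPoint u v n i := by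
  simp only [gridPoint]; push_cast
  rcases eq_or_ne (n : ℝ) 0 with hn | hn
  · simp [hn]
  · field_simp

variable {u v}

lemma gridPoint_mono (huv : u ≤ v) (n : ℕ) : Monotone (gridPoint u v n) := by
  intro i j hij
  simp only [gridPoint]
  gcongr

lemma gridPoint_mem_Icc (huv : u ≤ v) {n i : ℕ} (hi : i ≤ n) : gridPoint u v n i ∈ Icc u v := by
  rcases eq_or_ne n 0 with rfl | hn
  · simp [gridPoint, huv]
  · refine ⟨?_, ?_⟩
    · simpa [gridPoint_zero] using gridPoint_mono huv n (Nat.zero_le i)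
    · simpa [gridPoint_self u v hn] using gridPoint_mono huv n hi

end Grid

lemma Finset.sum_range_two_mul {E : Type*} [AddCommMonoid E] (g : ℕ → E) (n : ℕ) :
    ∑ i ∈ Finset.range (2 * n), g i = ∑ i ∈ Finset.range n, (g (2 * i) + g (2 * i + 1)) := by
  induction n with
  | zero => simp
  | succ n ih =>
    rw [Nat.mul_succ, Finset.sum_range_succ, Finset.sum_range_succ, Finset.sum_range_succ, ih]
    abel

lemma mul_div_rpow_eq {n x : ℝ} (hn : 0 < n) (hx : 0 ≤ x) (α : ℝ) :
    n * (x / n) ^ α = n ^ (1 - α) * x ^ α := by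
  rw [Real.div_rpow hx hn.le, Real.rpow_sub hn, Real.rpow_one]
  field_simp

section Sewing

variable {E : Type*} [SeminormedAddCommGroup E]

noncomputable def dyadicSum (Ξ : ℝ → ℝ → E) (u v : ℝ) (k : ℕ) : E :=
  ∑ i ∈ Finset.range (2 ^ k), Ξ (gridPoint u v (2 ^ k) i) (gridPoint u v (2 ^ k) (i + 1))

lemma dyadicSum_zero (Ξ : ℝ → ℝ → E) (u v : ℝ) : dyadicSum Ξ u v 0 = Ξ u v := by
  simp [dyadicSum, gridPoint]

lemma dyadicSum_succ_sub (Ξ : ℝ → ℝ → E) (u v : ℝ) (k : ℕ) :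
    dyadicSum Ξ u v (k + 1) - dyadicSum Ξ u v k =
      ∑ i ∈ Finset.range (2 ^ k),
        -(Ξ (gridPoint u v (2 ^ k) i) (gridPoint u v (2 ^ k) (i + 1))
          - Ξ (gridPoint u v (2 ^ k) i) (gridPoint u v (2 ^ (k + 1)) (2 * i + 1))
          - Ξ (gridPoint u v (2 ^ (k + 1)) (2 * i + 1)) (gridPoint u v (2 ^ k) (i + 1))) := by
  have hleft (i : ℕ) : gridPoint u v (2 ^ (k + 1)) (2 * i) = gridPoint u v (2 ^ k) i := by
    rw [pow_succ', gridPoint_two_mul]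
  have hright (i : ℕ) : gridPoint u v (2 ^ (k + 1)) (2 * i + 1 + 1) =
      gridPoint u v (2 ^ k) (i + 1) := by
    rw [show 2 * i + 1 + 1 = 2 * (i + 1) by ring, pow_succ', gridPoint_two_mul]
  rw [dyadicSum, dyadicSum, pow_succ' 2 k, Finset.sum_range_two_mul, ← pow_succ',
    ← Finset.sum_sub_distrib]
  refine Finset.sum_congr rfl fun i _ => ?_
  rw [hleft, hright]
  abel

lemma norm_dyadicSum_succ_sub_le {Ξ : ℝ → ℝ → E} {u v α c : ℝ} (huv : u ≤ v)
    (hΞ : ∀ a m b, u ≤ a → a ≤ m → m ≤ b → b ≤ v → ‖Ξ a b - Ξ a m - Ξ m b‖ ≤ c * (b - a) ^ α)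
    (k : ℕ) :
    ‖dyadicSum Ξ u v (k + 1) - dyadicSum Ξ u v k‖ ≤ c * (v - u) ^ α * (2 ^ (1 - α)) ^ k := by
  set p := gridPoint u v (2 ^ k)
  set q := gridPoint u v (2 ^ (k + 1))
  have hterm : ∀ i ∈ Finset.range (2 ^ k),
      ‖Ξ (p i) (p (i + 1)) - Ξ (p i) (q (2 * i + 1)) - Ξ (q (2 * i + 1)) (p (i + 1))‖ ≤
        c * ((v - u) / 2 ^ k) ^ α := by
    intro i hi
    have hi : i + 1 ≤ 2 ^ k := Finset.mem_range.mp hi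
    have hpq : p i = q (2 * i) := by simp only [p, q, pow_succ', gridPoint_two_mul]
    have hqp : q (2 * i + 2) = p (i + 1) := by
      simp only [p, q, pow_succ', show 2 * i + 2 = 2 * (i + 1) by ring, gridPoint_two_mul]
    have hstep : p (i + 1) - p i = (v - u) / 2 ^ k := by
      simp only [p, gridPoint_succ_sub]; push_cast; rfl
    refine (hΞ _ _ _ (gridPoint_mem_Icc huv (by omega)).1 ?_ ?_
      (gridPoint_mem_Icc huv hi).2).trans_eq (by rw [hstep])
    · show p i ≤ _
      rw [hpq]; exact gridPoint_mono huv _ (by omega)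
    · show _ ≤ p (i + 1)
      rw [← hqp]; exact gridPoint_mono huv _ (by omega)
  calc ‖dyadicSum Ξ u v (k + 1) - dyadicSum Ξ u v k‖
      ≤ ∑ _i ∈ Finset.range (2 ^ k), c * ((v - u) / 2 ^ k) ^ α := by
        rw [dyadicSum_succ_sub]
        refine (norm_sum_le _ _).trans (Finset.sum_le_sum fun i hi => ?_)
        rw [norm_neg]; exact hterm i hi
    _ = c * (v - u) ^ α * (2 ^ (1 - α)) ^ k := by
        rw [Finset.sum_const, Finset.card_range, nsmul_eq_mul, mul_left_comm, Nat.cast_pow,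
          Nat.cast_ofNat, mul_div_rpow_eq (by positivity) (by linarith),
          ← Real.rpow_natCast_mul (by norm_num), ← Real.rpow_mul_natCast (by norm_num),
          mul_comm (1 - α)]
        ring

noncomputable def sewingConst (α : ℝ) : ℝ := (1 - 2 ^ (1 - α))⁻¹

lemma norm_dyadicSum_sub_le {Ξ : ℝ → ℝ → E} {u v α c : ℝ} (huv : u ≤ v) (hα : 1 < α)
    (hc : 0 ≤ c)
    (hΞ : ∀ a m b, u ≤ a → a ≤ m → m ≤ b → b ≤ v → ‖Ξ a b - Ξ a m - Ξ m b‖ ≤ c * (b - a) ^ α)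
    (k : ℕ) :
    ‖dyadicSum Ξ u v k - Ξ u v‖ ≤ sewingConst α * c * (v - u) ^ α := by
  have hr0 : (0 : ℝ) ≤ 2 ^ (1 - α) := by positivity
  have hr1 : (2 : ℝ) ^ (1 - α) < 1 := Real.rpow_lt_one_of_one_lt_of_neg one_lt_two (by linarith)
  have hB : 0 ≤ c * (v - u) ^ α := mul_nonneg hc (Real.rpow_nonneg (by linarith) _)
  calc ‖dyadicSum Ξ u v k - Ξ u v‖
      ≤ ∑ j ∈ Finset.range k, ‖dyadicSum Ξ u v (j + 1) - dyadicSum Ξ u v j‖ := by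
        simpa [dist_eq_norm', dyadicSum_zero] using dist_le_range_sum_dist (dyadicSum Ξ u v) k
    _ ≤ ∑ j ∈ Finset.range k, c * (v - u) ^ α * (2 ^ (1 - α)) ^ j :=
        Finset.sum_le_sum fun j _ => norm_dyadicSum_succ_sub_le huv hΞ j
    _ ≤ c * (v - u) ^ α * sewingConst α := by
        rw [← Finset.mul_sum, ← Nat.Ico_zero_eq_range]
        refine mul_le_mul_of_nonneg_left ?_ hB
        simpa [sewingConst] using geom_sum_Ico_le_of_lt_one (m := 0) (n := k) hr0 hr1
    _ = sewingConst α * c * (v - u) ^ α := by ring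

end Sewing

section YoungIntegral

open Filter Topology

variable {d : ℕ} (A : ℝ → (Fin d → ℝ) → Fin d → ℝ) (θ : ℝ → Fin d → ℝ)

def youngGerm (a b : ℝ) : Fin d → ℝ := A b (θ a) - A a (θ a)

lemma riemannSum_gridPoint (u v : ℝ) (n : ℕ) :
    riemannSum A θ (fun i : Fin (n + 1) => gridPoint u v n i) =
      ∑ i ∈ Finset.range n, youngGerm A θ (gridPoint u v n i) (gridPoint u v n (i + 1)) := by
  rw [riemannSum, ← Fin.sum_univ_eq_sum_range]
  simp [youngGerm]

variable {u v : ℝ}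

lemma isPartition_gridPoint (huv : u ≤ v) {n : ℕ} (hn : n ≠ 0) :
    IsPartition u v (fun i : Fin (n + 1) => gridPoint u v n i) :=
  ⟨fun _ _ hij => gridPoint_mono huv n hij, gridPoint_zero u v n, gridPoint_self u v hn⟩

lemma meshLE_gridPoint {n : ℕ} {δ : ℝ} (hδ : (v - u) / n ≤ δ) :
    MeshLE (fun i : Fin (n + 1) => gridPoint u v n i) δ := fun i => by
  simpa [gridPoint_succ_sub] using hδ

lemma IsNYIntegral.tendsto_dyadicSum {I : Fin d → ℝ} (hI : IsNYIntegral A θ u v I)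
    (huv : u ≤ v) : Tendsto (dyadicSum (youngGerm A θ) u v) atTop (𝓝 I) := by
  rw [Metric.tendsto_nhds]
  intro ε hε
  obtain ⟨δ, hδ, hIδ⟩ := hI (ε / 2) (half_pos hε)
  have hmesh : Tendsto (fun k : ℕ => (v - u) / 2 ^ k) atTop (𝓝 0) :=
    tendsto_const_nhds.div_atTop (tendsto_pow_atTop_atTop_of_one_lt one_lt_two)
  filter_upwards [hmesh.eventually (ge_mem_nhds hδ)] with k hk
  have hRS := hIδ (2 ^ k) _ (isPartition_gridPoint huv (by positivity))
    (meshLE_gridPoint (by simpa using hk))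
  rw [riemannSum_gridPoint, ← Nat.cast_ofNat, ← Nat.cast_pow] at hRS
  rw [dist_eq_norm, dyadicSum]
  exact hRS.trans_lt (half_lt_self hε)

end YoungIntegral

section LocalEstimate

variable {d : ℕ} {A : ℝ → (Fin d → ℝ) → Fin d → ℝ} {θ : ℝ → Fin d → ℝ}

lemma IsNYIntegral.norm_sub_youngGerm_le {u v α c : ℝ} {I : Fin d → ℝ}
    (hI : IsNYIntegral A θ u v I) (huv : u ≤ v) (hα : 1 < α) (hc : 0 ≤ c)
    (hΞ : ∀ a m b, u ≤ a → a ≤ m → m ≤ b → b ≤ v →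
      ‖youngGerm A θ a b - youngGerm A θ a m - youngGerm A θ m b‖ ≤ c * (b - a) ^ α) :
    ‖I - youngGerm A θ u v‖ ≤ sewingConst α * c * (v - u) ^ α :=
  le_of_tendsto ((hI.tendsto_dyadicSum A θ huv).sub_const _).norm
    (Filter.Eventually.of_forall fun k => norm_dyadicSum_sub_le huv hα hc hΞ k)

lemma norm_youngGerm_defect_le {T γ ν NA K : ℝ} (hγ : 0 ≤ γ) (hν : 0 ≤ ν) (hNA : 0 ≤ NA)
    (hK : 0 ≤ K)
    (hA : ∀ s ∈ Icc 0 T, ∀ t ∈ Icc 0 T, ∀ x y : Fin d → ℝ,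
      ‖A t x - A t y - (A s x - A s y)‖ ≤ NA * |t - s| ^ γ * ‖x - y‖ ^ ν)
    {a m b : ℝ} (ha : 0 ≤ a) (ham : a ≤ m) (hmb : m ≤ b) (hb : b ≤ T)
    (hθ : ‖θ m - θ a‖ ≤ K * (m - a) ^ γ) :
    ‖youngGerm A θ a b - youngGerm A θ a m - youngGerm A θ m b‖ ≤
      NA * K ^ ν * (b - a) ^ (γ * (1 + ν)) := by
  have hdefect : youngGerm A θ a b - youngGerm A θ a m - youngGerm A θ m b =
      -(A b (θ m) - A b (θ a) - (A m (θ m) - A m (θ a))) := by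
    simp only [youngGerm]; abel
  have hba : 0 ≤ b - a := by linarith
  calc ‖youngGerm A θ a b - youngGerm A θ a m - youngGerm A θ m b‖
      ≤ NA * |b - m| ^ γ * ‖θ m - θ a‖ ^ ν := by
        rw [hdefect, norm_neg]
        exact hA m ⟨by linarith, by linarith⟩ b ⟨by linarith, hb⟩ _ _
    _ ≤ NA * (b - a) ^ γ * (K * (b - a) ^ γ) ^ ν := by
        rw [abs_of_nonneg (by linarith)]
        gcongr
        exact hθ.trans (by gcongr)
    _ = NA * K ^ ν * (b - a) ^ (γ * (1 + ν)) := by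
        rw [Real.mul_rpow hK (by positivity), ← Real.rpow_mul hba, mul_one_add,
          Real.rpow_add_of_nonneg hba hγ (by positivity)]
        ring

end LocalEstimate

def HolderOnWindows {E : Type*} [SeminormedAddCommGroup E] (θ : ℝ → E) (S : Set ℝ)
    (γ l K : ℝ) : Prop :=
  ∀ s ∈ S, ∀ t ∈ S, s ≤ t → t - s ≤ l → ‖θ t - θ s‖ ≤ K * (t - s) ^ γ

namespace HolderOnWindows

variable {E : Type*} [SeminormedAddCommGroup E] {θ : ℝ → E} {S : Set ℝ} {γ l K : ℝ}

lemma mono {S' : Set ℝ} {l' K' : ℝ} (h : HolderOnWindows θ S γ l K) (hS : S' ⊆ S) (hl : l' ≤ l)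
    (hK : K ≤ K') : HolderOnWindows θ S' γ l' K' := fun s hs t ht hst hstl =>
  (h s (hS hs) t (hS ht) hst (hstl.trans hl)).trans
    (mul_le_mul_of_nonneg_right hK (Real.rpow_nonneg (sub_nonneg.mpr hst) _))

lemma exists_least (h : HolderOnWindows θ S γ l K) :
    ∃ K₀, 0 ≤ K₀ ∧ HolderOnWindows θ S γ l K₀ ∧
      ∀ K', 0 ≤ K' → HolderOnWindows θ S γ l K' → K₀ ≤ K' := by
  set R : Set ℝ := insert 0 {r | ∃ s ∈ S, ∃ t ∈ S, s < t ∧ t - s ≤ l ∧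
    r = ‖θ t - θ s‖ / (t - s) ^ γ}
  have hbdd : BddAbove R := by
    refine ⟨max K 0, ?_⟩
    rintro r (rfl | ⟨s, hs, t, ht, hst, hstl, rfl⟩)
    · exact le_max_right _ _
    · rw [div_le_iff₀ (Real.rpow_pos_of_pos (sub_pos.mpr hst) _)]
      exact (h s hs t ht hst.le hstl).trans
        (mul_le_mul_of_nonneg_right (le_max_left _ _) (Real.rpow_nonneg (by linarith) _))
  have hK₀ : 0 ≤ sSup R := le_csSup hbdd (mem_insert _ _)
  refine ⟨sSup R, hK₀, ?_, ?_⟩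
  · intro s hs t ht hst hstl
    rcases hst.lt_or_eq with hst | rfl
    · rw [← div_le_iff₀ (Real.rpow_pos_of_pos (sub_pos.mpr hst) _)]
      exact le_csSup hbdd (mem_insert_of_mem _ ⟨s, hs, t, ht, hst, hstl, rfl⟩)
    · rw [sub_self, norm_zero]
      exact mul_nonneg hK₀ (Real.rpow_nonneg (sub_nonneg.mpr le_rfl) _)
  · intro K' hK' h'
    refine csSup_le ⟨0, mem_insert _ _⟩ ?_
    rintro r (rfl | ⟨s, hs, t, ht, hst, hstl, rfl⟩)
    · exact hK'
    · rw [div_le_iff₀ (Real.rpow_pos_of_pos (sub_pos.mpr hst) _)]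
      exact h' s hs t ht hst.le hstl

lemma norm_sub_le {T : ℝ} {N : ℕ} (hN : N ≠ 0) (h : HolderOnWindows θ (Icc 0 T) γ (T / N) K)
    {s t : ℝ} (hs : 0 ≤ s) (hst : s ≤ t) (ht : t ≤ T) :
    ‖θ t - θ s‖ ≤ K * N ^ (1 - γ) * (t - s) ^ γ := by
  set q := gridPoint s t N
  have hq : ∀ i ≤ N, q i ∈ Icc 0 T := fun i hi =>
    Icc_subset_Icc hs ht (gridPoint_mem_Icc hst hi)
  have hstep (i : ℕ) : q (i + 1) - q i = (t - s) / N := gridPoint_succ_sub s t N i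
  have hNpos : (0 : ℝ) < N := by positivity
  calc ‖θ t - θ s‖ = ‖∑ i ∈ Finset.range N, (θ (q (i + 1)) - θ (q i))‖ := by
        rw [Finset.sum_range_sub (fun i => θ (q i))]
        simp only [q, gridPoint_zero, gridPoint_self s t hN]
    _ ≤ ∑ _i ∈ Finset.range N, K * ((t - s) / N) ^ γ := by
        refine (norm_sum_le _ _).trans (Finset.sum_le_sum fun i hi => ?_)
        have hi : i + 1 ≤ N := Finset.mem_range.mp hi
        rw [← hstep]
        refine h _ (hq i (by omega)) _ (hq (i + 1) hi) (gridPoint_mono hst N (by omega)) ?_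
        rw [hstep]
        gcongr
        linarith
    _ = K * N ^ (1 - γ) * (t - s) ^ γ := by
        rw [Finset.sum_const, Finset.card_range, nsmul_eq_mul, mul_left_comm,
          mul_div_rpow_eq hNpos (by linarith)]
        ring

end HolderOnWindows

lemma le_two_mul_add_one_of_le_add_mul_rpow {x a b ν : ℝ} (hx : 0 ≤ x) (hν0 : 0 ≤ ν)
    (hν1 : ν ≤ 1) (hb : b ≤ 1 / 2) (h : x ≤ a + b * x ^ ν) : x ≤ 2 * a + 1 := by
  have hxν : x ^ ν ≤ x + 1 := by
    rcases le_total x 1 with hx1 | hx1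
    · linarith [Real.rpow_le_one hx hx1 hν0]
    · linarith [Real.rpow_le_self_of_one_le hx1 hν1]
  nlinarith [mul_le_mul hb hxν (Real.rpow_nonneg hx ν) (by norm_num)]

lemma exists_grid_size {T X p q : ℝ} (hT : 0 < T) (hX : 1 ≤ X) (hp : 0 < p) (hq : 0 ≤ q)
    (hqp : q ≤ p) : ∃ N : ℕ, N ≠ 0 ∧ (T / N) ^ p ≤ X⁻¹ ∧ (N : ℝ) ^ q ≤ (T + 1) ^ q * X := by
  set M := X ^ (1 / p)
  have hM : 1 ≤ M := Real.one_le_rpow hX (by positivity)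
  have hMp : M ^ p = X := by
    rw [← Real.rpow_mul (by linarith), one_div_mul_cancel hp.ne', Real.rpow_one]
  have hTM : T * M ≤ ⌈T * M⌉₊ := Nat.le_ceil _
  have hN : (0 : ℝ) < ⌈T * M⌉₊ := by nlinarith
  refine ⟨⌈T * M⌉₊, by exact_mod_cast hN.ne', ?_, ?_⟩
  · calc (T / ⌈T * M⌉₊) ^ p ≤ M⁻¹ ^ p := by
          gcongr
          rw [div_le_iff₀ hN]
          nlinarith [inv_mul_cancel₀ (by linarith : M ≠ 0)]
      _ = X⁻¹ := by rw [Real.inv_rpow (by linarith), hMp]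
  · have hNle : (⌈T * M⌉₊ : ℝ) ≤ (T + 1) * M := by
      nlinarith [Nat.ceil_lt_add_one (by positivity : 0 ≤ T * M)]
    calc (⌈T * M⌉₊ : ℝ) ^ q ≤ ((T + 1) * M) ^ q := by gcongr
      _ = (T + 1) ^ q * X ^ (q / p) := by
          rw [Real.mul_rpow (by linarith) (by linarith), ← Real.rpow_mul (by linarith),
            one_div_mul_eq_div]
      _ ≤ (T + 1) ^ q * X := by
          gcongr
          calc X ^ (q / p) ≤ X ^ (1 : ℝ) :=
                Real.rpow_le_rpow_of_exponent_le hX ((div_le_one hp).mpr hqp)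
            _ = X := Real.rpow_one X

lemma one_le_sewingConst {α : ℝ} (hα : 1 < α) : 1 ≤ sewingConst α := by
  have hr0 : (0 : ℝ) < 2 ^ (1 - α) := by positivity
  have hr1 : (2 : ℝ) ^ (1 - α) < 1 := Real.rpow_lt_one_of_one_lt_of_neg one_lt_two (by linarith)
  exact one_le_inv₀ (by linarith) |>.mpr (by linarith)

section APriori

variable {d : ℕ} {A : ℝ → (Fin d → ℝ) → Fin d → ℝ} {θ : ℝ → Fin d → ℝ} {γ ν T NA : ℝ}

theorem norm_sub_le_of_isNYIntegral {K u v : ℝ} (hγ : 0 ≤ γ) (hν : 0 ≤ ν)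
    (h1 : 1 < γ * (1 + ν)) (hNA : 0 ≤ NA) (hK : 0 ≤ K)
    (hAt : ∀ s ∈ Icc 0 T, ∀ t ∈ Icc 0 T, ∀ x : Fin d → ℝ, ‖A t x - A s x‖ ≤ NA * |t - s| ^ γ)
    (hA : ∀ s ∈ Icc 0 T, ∀ t ∈ Icc 0 T, ∀ x y : Fin d → ℝ,
      ‖A t x - A t y - (A s x - A s y)‖ ≤ NA * |t - s| ^ γ * ‖x - y‖ ^ ν)
    (hu : 0 ≤ u) (huv : u ≤ v) (hv : v ≤ T) (hθ : HolderOnWindows θ (Icc u v) γ (v - u) K)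
    (hI : IsNYIntegral A θ u v (θ v - θ u)) :
    ‖θ v - θ u‖ ≤
      NA * (v - u) ^ γ + sewingConst (γ * (1 + ν)) * (NA * K ^ ν) * (v - u) ^ (γ * (1 + ν)) := by
  have hsew := hI.norm_sub_youngGerm_le huv h1 (by positivity)
    fun a m b hua ham hmb hbv => norm_youngGerm_defect_le hγ hν hNA hK hA (hu.trans hua) ham hmb
      (hbv.trans hv) (hθ a ⟨hua, by linarith⟩ m ⟨by linarith, by linarith⟩ ham (by linarith))
  have hgerm : ‖youngGerm A θ u v‖ ≤ NA * (v - u) ^ γ := by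
    simpa [youngGerm, abs_of_nonneg (sub_nonneg.mpr huv)] using
      hAt u ⟨hu, by linarith⟩ v ⟨by linarith, hv⟩ (θ u)
  exact (norm_le_norm_add_norm_sub' _ (youngGerm A θ u v)).trans (add_le_add hgerm hsew)

lemma HolderOnWindows.of_isNYIntegral {l K : ℝ} (hγ : 0 ≤ γ) (hν : 0 ≤ ν)
    (h1 : 1 < γ * (1 + ν)) (hNA : 0 ≤ NA) (hK : 0 ≤ K)
    (hAt : ∀ s ∈ Icc 0 T, ∀ t ∈ Icc 0 T, ∀ x : Fin d → ℝ, ‖A t x - A s x‖ ≤ NA * |t - s| ^ γ)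
    (hA : ∀ s ∈ Icc 0 T, ∀ t ∈ Icc 0 T, ∀ x y : Fin d → ℝ,
      ‖A t x - A t y - (A s x - A s y)‖ ≤ NA * |t - s| ^ γ * ‖x - y‖ ^ ν)
    (hI : ∀ s ∈ Icc 0 T, ∀ t ∈ Icc 0 T, s ≤ t → IsNYIntegral A θ s t (θ t - θ s))
    (hθ : HolderOnWindows θ (Icc 0 T) γ l K) :
    HolderOnWindows θ (Icc 0 T) γ l
      (NA + sewingConst (γ * (1 + ν)) * NA * l ^ (γ * ν) * K ^ ν) := by
  intro u hu v hv huv hvl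
  have hκ := one_le_sewingConst h1
  have hvu : 0 ≤ v - u := sub_nonneg.mpr huv
  calc ‖θ v - θ u‖
      ≤ NA * (v - u) ^ γ + sewingConst (γ * (1 + ν)) * (NA * K ^ ν) * (v - u) ^ (γ * (1 + ν)) :=
        norm_sub_le_of_isNYIntegral hγ hν h1 hNA hK hAt hA hu.1 huv hv.2
          (hθ.mono (Icc_subset_Icc hu.1 hv.2) hvl le_rfl) (hI u hu v hv huv)
    _ = NA * (v - u) ^ γ +
          sewingConst (γ * (1 + ν)) * NA * (v - u) ^ (γ * ν) * K ^ ν * (v - u) ^ γ := by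
        rw [mul_one_add, Real.rpow_add_of_nonneg hvu hγ (by positivity)]
        ring
    _ ≤ NA * (v - u) ^ γ +
          sewingConst (γ * (1 + ν)) * NA * l ^ (γ * ν) * K ^ ν * (v - u) ^ γ := by
        have : 0 ≤ sewingConst (γ * (1 + ν)) := by linarith
        gcongr
    _ = (NA + sewingConst (γ * (1 + ν)) * NA * l ^ (γ * ν) * K ^ ν) * (v - u) ^ γ := by ring

lemma HolderOnWindows.two_mul_add_one_of_isNYIntegral {l K : ℝ} (hγ : 0 ≤ γ) (hν0 : 0 ≤ ν)
    (hν1 : ν ≤ 1) (h1 : 1 < γ * (1 + ν)) (hNA : 0 ≤ NA) (hl0 : 0 ≤ l)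
    (hl : sewingConst (γ * (1 + ν)) * NA * l ^ (γ * ν) ≤ 1 / 2)
    (hAt : ∀ s ∈ Icc 0 T, ∀ t ∈ Icc 0 T, ∀ x : Fin d → ℝ, ‖A t x - A s x‖ ≤ NA * |t - s| ^ γ)
    (hA : ∀ s ∈ Icc 0 T, ∀ t ∈ Icc 0 T, ∀ x y : Fin d → ℝ,
      ‖A t x - A t y - (A s x - A s y)‖ ≤ NA * |t - s| ^ γ * ‖x - y‖ ^ ν)
    (hI : ∀ s ∈ Icc 0 T, ∀ t ∈ Icc 0 T, s ≤ t → IsNYIntegral A θ s t (θ t - θ s))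
    (hθ : HolderOnWindows θ (Icc 0 T) γ l K) :
    HolderOnWindows θ (Icc 0 T) γ l (2 * NA + 1) := by
  obtain ⟨K₀, hK₀, hθK₀, hleast⟩ := hθ.exists_least
  have hself := hθK₀.of_isNYIntegral hγ hν0 h1 hNA hK₀ hAt hA hI
  have hκ : 0 ≤ sewingConst (γ * (1 + ν)) := zero_le_one.trans (one_le_sewingConst h1)
  have hK₀le : K₀ ≤ 2 * NA + 1 := le_two_mul_add_one_of_le_add_mul_rpow hK₀ hν0 hν1 hl
    (hleast _ (by positivity) hself)
  exact hθK₀.mono subset_rfl le_rfl hK₀le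

theorem norm_sub_le_of_isNYIntegral_of_holder (hγ1 : γ ≤ 1) (hν0 : 0 < ν) (hν1 : ν ≤ 1)
    (h1 : 1 < γ * (1 + ν)) (hT : 0 < T) (hNA : 0 ≤ NA)
    (hAt : ∀ s ∈ Icc 0 T, ∀ t ∈ Icc 0 T, ∀ x : Fin d → ℝ, ‖A t x - A s x‖ ≤ NA * |t - s| ^ γ)
    (hA : ∀ s ∈ Icc 0 T, ∀ t ∈ Icc 0 T, ∀ x y : Fin d → ℝ,
      ‖A t x - A t y - (A s x - A s y)‖ ≤ NA * |t - s| ^ γ * ‖x - y‖ ^ ν)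
    (hθ : ∃ K : ℝ, ∀ s ∈ Icc 0 T, ∀ t ∈ Icc 0 T, ‖θ t - θ s‖ ≤ K * |t - s| ^ γ)
    (hI : ∀ s ∈ Icc 0 T, ∀ t ∈ Icc 0 T, s ≤ t → IsNYIntegral A θ s t (θ t - θ s))
    {s t : ℝ} (hs : 0 ≤ s) (hst : s ≤ t) (ht : t ≤ T) :
    ‖θ t - θ s‖ ≤
      8 * sewingConst (γ * (1 + ν)) * (T + 1) ^ (1 - γ) * (1 + NA ^ 2) * (t - s) ^ γ := by
  have hγ0 : 0 < γ := by nlinarith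
  set κ := sewingConst (γ * (1 + ν))
  have hκ : 1 ≤ κ := one_le_sewingConst h1
  obtain ⟨N, hN, hNl, hNγ⟩ := exists_grid_size hT (X := 2 * κ * (NA + 1)) (by nlinarith)
    (mul_pos hγ0 hν0) (sub_nonneg.mpr hγ1) (by nlinarith : 1 - γ ≤ γ * ν)
  obtain ⟨K, hK⟩ := hθ
  have hθK : HolderOnWindows θ (Icc 0 T) γ (T / N) K := fun s hs t ht hst _ => by
    simpa [abs_of_nonneg (sub_nonneg.mpr hst)] using hK s hs t ht
  have hl : κ * NA * (T / N) ^ (γ * ν) ≤ 1 / 2 := by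
    calc κ * NA * (T / N) ^ (γ * ν) ≤ κ * NA * (2 * κ * (NA + 1))⁻¹ := by gcongr
      _ ≤ 1 / 2 := by
        rw [← div_eq_mul_inv, div_le_iff₀ (by positivity)]
        nlinarith
  have hloc := hθK.two_mul_add_one_of_isNYIntegral hγ0.le hν0.le hν1 h1 hNA (by positivity) hl
    hAt hA hI
  calc ‖θ t - θ s‖ ≤ (2 * NA + 1) * N ^ (1 - γ) * (t - s) ^ γ := hloc.norm_sub_le hN hs hst ht
    _ ≤ (2 * NA + 1) * ((T + 1) ^ (1 - γ) * (2 * κ * (NA + 1))) * (t - s) ^ γ := by gcongr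
    _ = 2 * κ * (T + 1) ^ (1 - γ) * ((2 * NA + 1) * (NA + 1)) * (t - s) ^ γ := by ring
    _ ≤ 2 * κ * (T + 1) ^ (1 - γ) * (4 * (1 + NA ^ 2)) * (t - s) ^ γ := by
        gcongr 2 * κ * (T + 1) ^ (1 - γ) * ?_ * (t - s) ^ γ
        nlinarith [sq_nonneg (NA - 1)]
    _ = 8 * κ * (T + 1) ^ (1 - γ) * (1 + NA ^ 2) * (t - s) ^ γ := by ring

end APriori

theorem stmt11_general (γ ν T : ℝ) (hγ1 : γ ≤ 1) (hν : ν ∈ Set.Ioo (0:ℝ) 1)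
    (h1 : 1 < γ * (1 + ν)) (hT : 0 < T) :
    ∃ C : ℝ, 0 < C ∧
      ∀ (d : ℕ) (A : ℝ → (Fin d → ℝ) → Fin d → ℝ) (θ : ℝ → Fin d → ℝ) (NA : ℝ),
      (∀ t ∈ Set.Icc 0 T, ∀ x : Fin d → ℝ, ‖A t x‖ ≤ NA) →
      (∀ t ∈ Set.Icc 0 T, ∀ x y : Fin d → ℝ, ‖A t x - A t y‖ ≤ NA * ‖x - y‖ ^ ν) →
      (∀ s ∈ Set.Icc 0 T, ∀ t ∈ Set.Icc 0 T, ∀ x : Fin d → ℝ,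
        ‖A t x - A s x‖ ≤ NA * |t - s| ^ γ) →
      (∀ s ∈ Set.Icc 0 T, ∀ t ∈ Set.Icc 0 T, ∀ x y : Fin d → ℝ,
        ‖A t x - A t y - (A s x - A s y)‖ ≤ NA * |t - s| ^ γ * ‖x - y‖ ^ ν) →
      (∃ K : ℝ, ∀ s ∈ Set.Icc 0 T, ∀ t ∈ Set.Icc 0 T, ‖θ t - θ s‖ ≤ K * |t - s| ^ γ) →
      (∀ s ∈ Set.Icc 0 T, ∀ t ∈ Set.Icc 0 T, s ≤ t → IsNYIntegral A θ s t (θ t - θ s)) →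
      (∀ s ∈ Set.Icc 0 T, ∀ t ∈ Set.Icc 0 T,
        ‖θ t - θ s‖ ≤ C * (1 + NA ^ 2) * |t - s| ^ γ) ∧
      (∀ t ∈ Set.Icc 0 T, ‖θ t‖ ≤ C * (1 + ‖θ 0‖ + NA ^ 2)) := by
  set C₁ := 8 * sewingConst (γ * (1 + ν)) * (T + 1) ^ (1 - γ)
  have hC₁ : 0 ≤ C₁ := by
    have := one_le_sewingConst h1
    positivity
  refine ⟨C₁ * (1 + T ^ γ) + 1, by positivity, fun d A θ NA hAsup _ hAt hA hθ hI => ?_⟩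
  have hNA : 0 ≤ NA := (norm_nonneg _).trans (hAsup 0 ⟨le_rfl, hT.le⟩ 0)
  have hholder : ∀ s ∈ Icc 0 T, ∀ t ∈ Icc 0 T, s ≤ t →
      ‖θ t - θ s‖ ≤ C₁ * (1 + NA ^ 2) * |t - s| ^ γ := fun s hs t ht hst => by
    rw [abs_of_nonneg (sub_nonneg.mpr hst)]
    exact norm_sub_le_of_isNYIntegral_of_holder hγ1 hν.1 hν.2.le h1 hT hNA hAt hA hθ hI hs.1
      hst ht.2
  have hC₁C : C₁ ≤ C₁ * (1 + T ^ γ) + 1 := by nlinarith [Real.rpow_nonneg hT.le γ]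
  refine ⟨fun s hs t ht => ?_, fun t ht => ?_⟩
  · rcases le_total s t with hst | hts
    · exact (hholder s hs t ht hst).trans (by gcongr)
    · rw [norm_sub_rev, abs_sub_comm]
      exact (hholder t ht s hs hts).trans (by gcongr)
  · have hγ0 : 0 ≤ γ := by nlinarith [hν.1]
    have hθt : ‖θ t - θ 0‖ ≤ C₁ * (1 + NA ^ 2) * T ^ γ := by
      refine (hholder 0 ⟨le_rfl, hT.le⟩ t ht ht.1).trans ?_
      rw [sub_zero, abs_of_nonneg ht.1]
      gcongr
      exacts [ht.1, ht.2]
    calc ‖θ t‖ ≤ ‖θ 0‖ + ‖θ t - θ 0‖ := norm_le_norm_add_norm_sub' _ _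
      _ ≤ (C₁ * (1 + T ^ γ) + 1) * (1 + ‖θ 0‖ + NA ^ 2) := by
        nlinarith [norm_nonneg (θ 0), sq_nonneg NA, Real.rpow_nonneg hT.le γ,
          mul_nonneg hC₁ (Real.rpow_nonneg hT.le γ)]

/-- A priori estimates for solutions of the nonlinear Young differential equation
`θ_t = θ_0 + ∫₀^t A(ds, θ_s)` with `A ∈ C^γ_t C^ν_x`, `γ > 1/2`, `γ(1+ν) > 1`:
any `C^γ` solution satisfies `[θ]_{C^γ} ≤ C (1 + ‖A‖²_{C^γ C^ν})` and
`‖θ‖_{C⁰} ≤ C (1 + |θ_0| + ‖A‖²_{C^γ C^ν})` with `C = C(γ,ν,T)`.  Here `NA` is a bound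
for the norm `‖A‖_{C^γ C^ν}` (sup, spatial Hölder, temporal Hölder and joint parts). -/
theorem stmt11 (γ ν T : ℝ) (hγ : 1/2 < γ) (hγ1 : γ ≤ 1) (hν : ν ∈ Set.Ioo (0:ℝ) 1)
    (h1 : 1 < γ * (1 + ν)) (hT : 0 < T) :
    ∃ C : ℝ, 0 < C ∧
      ∀ (d : ℕ) (A : ℝ → (Fin d → ℝ) → Fin d → ℝ) (θ : ℝ → Fin d → ℝ) (NA : ℝ),
      (∀ t ∈ Set.Icc 0 T, ∀ x : Fin d → ℝ, ‖A t x‖ ≤ NA) →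
      (∀ t ∈ Set.Icc 0 T, ∀ x y : Fin d → ℝ, ‖A t x - A t y‖ ≤ NA * ‖x - y‖ ^ ν) →
      (∀ s ∈ Set.Icc 0 T, ∀ t ∈ Set.Icc 0 T, ∀ x : Fin d → ℝ,
        ‖A t x - A s x‖ ≤ NA * |t - s| ^ γ) →
      (∀ s ∈ Set.Icc 0 T, ∀ t ∈ Set.Icc 0 T, ∀ x y : Fin d → ℝ,
        ‖A t x - A t y - (A s x - A s y)‖ ≤ NA * |t - s| ^ γ * ‖x - y‖ ^ ν) →
      (∃ K : ℝ, ∀ s ∈ Set.Icc 0 T, ∀ t ∈ Set.Icc 0 T, ‖θ t - θ s‖ ≤ K * |t - s| ^ γ) →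
      (∀ s ∈ Set.Icc 0 T, ∀ t ∈ Set.Icc 0 T, s ≤ t → IsNYIntegral A θ s t (θ t - θ s)) →
      (∀ s ∈ Set.Icc 0 T, ∀ t ∈ Set.Icc 0 T,
        ‖θ t - θ s‖ ≤ C * (1 + NA ^ 2) * |t - s| ^ γ) ∧
      (∀ t ∈ Set.Icc 0 T, ‖θ t‖ ≤ C * (1 + ‖θ 0‖ + NA ^ 2)) :=
  stmt11_general γ ν T hγ1 hν h1 hT
end

section
/- Let α ∈ (0, 1/2), β > α, and h ∈ C^β([0,T];ℝ) with h(0) = 0. Then the function t ↦ t^α (D^α (s^{-α} h))(t), where D^α is the Riemann–Liouville fractional derivative, belongs to L²(0,T), and there is a constant C = C(α, β, T) with ‖s^α D^α s^{-α} h‖_{L²(0,T)} ≤ C ‖h‖_{C^β}. -/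
/-!
For `0 < s < t` write `t^{-α} h t - s^{-α} h s = t^{-α} (h t - h s) - (s^{-α} - t^{-α}) h s`.
The Hölder bound, `|h s| ≤ K s^β` (from `h 0 = 0`) and the tangent-line estimate
`s^{-α} - t^{-α} ≤ α s^{-α-1} (t - s)` bound the integrand of the Marchaud integral by
`K (t^{-α} (t - s)^{β-α-1} + α s^{β-α-1} (t - s)^{-α})`, whose integral over `(0, t)` is
`O(t^{β-2α})`. Hence `t^α D^α (s^{-α} h)` is bounded by a multiple of `K` on `(0, T]`, and so is
its `L²` norm.
-/

open Real MeasureTheory Set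

lemma rpow_neg_sub_rpow_neg_le {α s t : ℝ} (hα0 : 0 ≤ α) (hα1 : α ≤ 1) (hs : 0 < s)
    (hst : s ≤ t) : s ^ (-α) - t ^ (-α) ≤ α * s ^ (-α - 1) * (t - s) := by
  set x := t / s - 1 with hx
  have hx0 : 0 ≤ x := by rw [hx, sub_nonneg, le_div_iff₀ hs]; linarith
  have ht : t = s * (1 + x) := by rw [hx]; field_simp; ring
  set y := (1 + x) ^ α
  have hy1 : 1 ≤ y := one_le_rpow (by linarith) hα0
  have bernoulli : y ≤ 1 + α * x := rpow_one_add_le_one_add_mul_self (by linarith) hα0 hα1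
  have hsα : 0 < s ^ (-α) := rpow_pos_of_pos hs _
  have hty : t ^ (-α) = s ^ (-α) * y⁻¹ := by
    rw [ht, mul_rpow hs.le (by linarith), rpow_neg (by linarith : (0:ℝ) ≤ 1 + x)]
  have hrhs : α * s ^ (-α - 1) * (t - s) = s ^ (-α) * (α * x) := by
    rw [rpow_sub_one hs.ne', ht]; field_simp; ring
  rw [hty, hrhs, ← mul_one_sub]
  refine mul_le_mul_of_nonneg_left ?_ hsα.le
  have : 1 - y⁻¹ = (y - 1) / y := by field_simp
  rw [this]
  exact (div_le_self (sub_nonneg.2 hy1) hy1).trans (by linarith)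

lemma rpow_le_of_half_le {a t u : ℝ} (ht : 0 < t) (hu : t / 2 ≤ u) (hut : u ≤ t) :
    u ^ a ≤ (2 ^ (-a) + 1) * t ^ a := by
  have hhalf : (t / 2) ^ a = 2 ^ (-a) * t ^ a := by
    rw [div_rpow ht.le zero_le_two, rpow_neg zero_le_two]; ring
  rcases le_total 0 a with ha | ha
  · have := rpow_le_rpow (by linarith) hut ha
    nlinarith [rpow_nonneg (zero_le_two (α := ℝ)) (-a), rpow_nonneg ht.le a]
  · have := rpow_le_rpow_of_nonpos (by linarith) hu ha
    nlinarith [rpow_nonneg ht.le a]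

/-- Splitting `(0, t)` at `t / 2` separates the two endpoint singularities; this replaces the
Beta function `B(a + 1, b + 1)` by an elementary bound. -/
lemma rpow_mul_sub_rpow_le {a b s t : ℝ} (hs : 0 < s) (hst : s ≤ t) :
    s ^ a * (t - s) ^ b ≤
      (2 ^ (-b) + 1) * t ^ b * s ^ a + (2 ^ (-a) + 1) * t ^ a * (t - s) ^ b := by
  have ht : 0 < t := hs.trans_le hst
  have hsa : 0 ≤ s ^ a := rpow_nonneg hs.le a
  have hta : 0 ≤ (t - s) ^ b := rpow_nonneg (by linarith) b
  have c1 : 0 ≤ (2 ^ (-b) + 1) * t ^ b := by positivity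
  have c2 : 0 ≤ (2 ^ (-a) + 1) * t ^ a := by positivity
  rcases le_total s (t / 2) with hs2 | hs2
  · have := rpow_le_of_half_le (a := b) ht (by linarith) (by linarith : t - s ≤ t)
    nlinarith [mul_nonneg c2 hta]
  · have := rpow_le_of_half_le (a := a) ht hs2 hst
    nlinarith [mul_nonneg c1 hsa]

lemma integrableOn_rpow_Ioc {e t : ℝ} (he : -1 < e) (ht : 0 ≤ t) :
    IntegrableOn (fun s => s ^ e) (Ioc 0 t) :=
  (intervalIntegrable_iff_integrableOn_Ioc_of_le ht).1
    (intervalIntegral.intervalIntegrable_rpow' he)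

lemma integrableOn_sub_rpow_Ioc {e t : ℝ} (he : -1 < e) (ht : 0 ≤ t) :
    IntegrableOn (fun s => (t - s) ^ e) (Ioc 0 t) := by
  refine (intervalIntegrable_iff_integrableOn_Ioc_of_le ht).1 ?_
  simpa using
    ((intervalIntegral.intervalIntegrable_rpow' he (a := 0) (b := t)).comp_sub_left t).symm

lemma setIntegral_rpow_Ioc {e t : ℝ} (he : -1 < e) (ht : 0 ≤ t) :
    ∫ s in Ioc 0 t, s ^ e = t ^ (e + 1) / (e + 1) := by
  rw [← intervalIntegral.integral_of_le ht, integral_rpow (Or.inl he),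
    zero_rpow (by linarith), sub_zero]

lemma setIntegral_sub_rpow_Ioc {e t : ℝ} (he : -1 < e) (ht : 0 ≤ t) :
    ∫ s in Ioc 0 t, (t - s) ^ e = t ^ (e + 1) / (e + 1) := by
  rw [← intervalIntegral.integral_of_le ht, intervalIntegral.integral_comp_sub_left
    (fun s => s ^ e), sub_self, sub_zero, intervalIntegral.integral_of_le ht,
    setIntegral_rpow_Ioc he ht]

lemma integrableOn_rpow_mul_sub_rpow {a b t : ℝ} (ha : -1 < a) (hb : -1 < b) (ht : 0 ≤ t) :
    IntegrableOn (fun s => s ^ a * (t - s) ^ b) (Ioc 0 t) := by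
  refine Integrable.mono' ((((integrableOn_rpow_Ioc ha ht).const_mul ((2 ^ (-b) + 1) * t ^ b)).add
    ((integrableOn_sub_rpow_Ioc hb ht).const_mul ((2 ^ (-a) + 1) * t ^ a))))
    (by fun_prop) ((ae_restrict_iff' measurableSet_Ioc).2 (.of_forall fun s hs => ?_))
  rw [norm_of_nonneg (mul_nonneg (rpow_nonneg hs.1.le a) (rpow_nonneg (sub_nonneg.2 hs.2) b))]
  exact rpow_mul_sub_rpow_le hs.1 hs.2

lemma setIntegral_rpow_mul_sub_rpow_le {a b t : ℝ} (ha : -1 < a) (hb : -1 < b) (ht : 0 < t) :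
    ∫ s in Ioc 0 t, s ^ a * (t - s) ^ b ≤
      ((2 ^ (-b) + 1) / (a + 1) + (2 ^ (-a) + 1) / (b + 1)) * t ^ (a + b + 1) := by
  have hA := (integrableOn_rpow_Ioc ha ht.le).const_mul ((2 ^ (-b) + 1) * t ^ b)
  have hB := (integrableOn_sub_rpow_Ioc hb ht.le).const_mul ((2 ^ (-a) + 1) * t ^ a)
  calc ∫ s in Ioc 0 t, s ^ a * (t - s) ^ b
      ≤ ∫ s in Ioc 0 t, ((2 ^ (-b) + 1) * t ^ b * s ^ a + (2 ^ (-a) + 1) * t ^ a * (t - s) ^ b) :=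
        setIntegral_mono_on (integrableOn_rpow_mul_sub_rpow ha hb ht.le) (hA.add hB)
          measurableSet_Ioc fun s hs => rpow_mul_sub_rpow_le hs.1 hs.2
    _ = _ := by
        rw [integral_add hA hB, integral_const_mul, integral_const_mul,
          setIntegral_rpow_Ioc ha ht.le, setIntegral_sub_rpow_Ioc hb ht.le]
        have e1 : t ^ b * t ^ (a + 1) = t ^ (a + b + 1) := by rw [← rpow_add ht]; ring_nf
        have e2 : t ^ a * t ^ (b + 1) = t ^ (a + b + 1) := by rw [← rpow_add ht]; ring_nf
        linear_combination (2 ^ (-b) + 1) / (a + 1) * e1 + (2 ^ (-a) + 1) / (b + 1) * e2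

/-- For `f = fun s => s ^ (-α) * h s` and `t > 0`,
`t ^ α * (D^α f) t = (Γ (1 - α))⁻¹ * (h t + α * t ^ α * marchaudIntegral α f t)`. -/
noncomputable def marchaudIntegral (α : ℝ) (f : ℝ → ℝ) (t : ℝ) : ℝ :=
  ∫ s in Ioc 0 t, (f t - f s) / (t - s) ^ (α + 1)

lemma stronglyMeasurable_marchaudIntegral {α : ℝ} {f : ℝ → ℝ} (hf : Measurable f) :
    StronglyMeasurable (marchaudIntegral α f) := by
  have hS : MeasurableSet {p : ℝ × ℝ | p.2 ∈ Ioc 0 p.1} :=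
    (measurableSet_lt measurable_const measurable_snd).inter
      (measurableSet_le measurable_snd measurable_fst)
  have hF : Measurable fun p : ℝ × ℝ => (f p.1 - f p.2) / (p.1 - p.2) ^ (α + 1) := by fun_prop
  convert (hF.indicator hS).stronglyMeasurable.integral_prod_right' (ν := volume) using 2 with t
  rw [marchaudIntegral, ← integral_indicator measurableSet_Ioc]
  rfl

lemma abs_rpow_neg_mul_sub_div_le {α β K s t x y : ℝ} (hα0 : 0 ≤ α) (hα1 : α ≤ 1)
    (hs : 0 < s) (hst : s < t) (hxy : |x - y| ≤ K * (t - s) ^ β) (hy : |y| ≤ K * s ^ β) :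
    |(t ^ (-α) * x - s ^ (-α) * y) / (t - s) ^ (α + 1)| ≤
      K * (t ^ (-α) * (t - s) ^ (β - α - 1) + α * (s ^ (β - α - 1) * (t - s) ^ (-α))) := by
  have hts : 0 < t - s := by linarith
  have htα : 0 ≤ t ^ (-α) := rpow_nonneg (hs.trans hst).le _
  have hgap := rpow_neg_sub_rpow_neg_le hα0 hα1 hs hst.le
  have hgap0 : 0 ≤ s ^ (-α) - t ^ (-α) :=
    sub_nonneg.2 (rpow_le_rpow_of_nonpos hs hst.le (by linarith))
  have hnum : |t ^ (-α) * x - s ^ (-α) * y| ≤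
      t ^ (-α) * (K * (t - s) ^ β) + α * s ^ (-α - 1) * (t - s) * (K * s ^ β) :=
    calc |t ^ (-α) * x - s ^ (-α) * y|
        = |t ^ (-α) * (x - y) - (s ^ (-α) - t ^ (-α)) * y| := by ring_nf
      _ ≤ t ^ (-α) * |x - y| + (s ^ (-α) - t ^ (-α)) * |y| := by
        refine (abs_sub _ _).trans_eq ?_
        rw [abs_mul, abs_mul, abs_of_nonneg htα, abs_of_nonneg hgap0]
      _ ≤ _ := add_le_add (mul_le_mul_of_nonneg_left hxy htα)
        (mul_le_mul hgap hy (abs_nonneg _) (by positivity))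
  have hden : 0 < (t - s) ^ (α + 1) := rpow_pos_of_pos hts _
  have c1 : (t - s) ^ (β - α - 1) * (t - s) ^ (α + 1) = (t - s) ^ β := by
    rw [← rpow_add hts]; ring_nf
  have c2 : s ^ (-α - 1) * s ^ β = s ^ (β - α - 1) := by rw [← rpow_add hs]; ring_nf
  have c3 : (t - s) ^ (-α) * (t - s) ^ (α + 1) = t - s := by rw [← rpow_add hts]; norm_num
  rw [abs_div, abs_of_pos hden, div_le_iff₀ hden]
  refine hnum.trans_eq ?_
  linear_combination (-K * t ^ (-α)) * c1 + (α * K * (t - s)) * c2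
    - (α * K * s ^ (β - α - 1)) * c3

noncomputable def marchaudConst (α β : ℝ) : ℝ :=
  (1 + α * (2 ^ α + 1)) / (β - α) + α * (2 ^ (α + 1 - β) + 1) / (1 - α)

lemma marchaudConst_nonneg {α β : ℝ} (hα0 : 0 ≤ α) (hα1 : α < 1) (hβ : α < β) :
    0 ≤ marchaudConst α β := by
  have : 0 < β - α := sub_pos.2 hβ
  have : 0 < 1 - α := sub_pos.2 hα1
  unfold marchaudConst
  positivity

lemma abs_marchaudIntegral_rpow_neg_mul_le {α β K t : ℝ} {h : ℝ → ℝ} (hα0 : 0 ≤ α)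
    (hα1 : α < 1) (hβ : α < β) (hK : 0 ≤ K) (ht : 0 < t) (h0 : h 0 = 0)
    (hHolder : ∀ s ∈ Icc 0 t, ∀ u ∈ Icc 0 t, |h u - h s| ≤ K * |u - s| ^ β) :
    |marchaudIntegral α (fun s => s ^ (-α) * h s) t| ≤
      K * marchaudConst α β * t ^ (β - 2 * α) := by
  have he : -1 < β - α - 1 := by linarith
  have hnegα : -1 < -α := by linarith
  set G : ℝ → ℝ := fun s => K * (t ^ (-α) * (t - s) ^ (β - α - 1) +
    α * (s ^ (β - α - 1) * (t - s) ^ (-α))) with hG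
  have hG1 := (integrableOn_sub_rpow_Ioc he ht.le).const_mul (t ^ (-α))
  have hG2 := (integrableOn_rpow_mul_sub_rpow he hnegα ht.le).const_mul α
  have hbound : ∀ s ∈ Ioc 0 t,
      ‖(t ^ (-α) * h t - s ^ (-α) * h s) / (t - s) ^ (α + 1)‖ ≤ G s := by
    rintro s ⟨hs, hst⟩
    rcases hst.lt_or_eq with hst | rfl
    · have hsT : s ∈ Icc 0 t := ⟨hs.le, hst.le⟩
      have htT : t ∈ Icc 0 t := ⟨ht.le, le_rfl⟩
      have h0T : (0 : ℝ) ∈ Icc 0 t := ⟨le_rfl, ht.le⟩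
      refine abs_rpow_neg_mul_sub_div_le hα0 hα1.le hs hst ?_ ?_
      · simpa [abs_of_pos (sub_pos.2 hst)] using hHolder s hsT t htT
      · simpa [h0, abs_of_pos hs] using hHolder 0 h0T s hsT
    · rw [sub_self, zero_div, norm_zero, hG]
      dsimp only
      rw [sub_self]
      positivity
  calc |marchaudIntegral α (fun s => s ^ (-α) * h s) t| ≤ ∫ s in Ioc 0 t, G s :=
        norm_integral_le_of_norm_le ((hG1.add hG2).const_mul K)
          ((ae_restrict_iff' measurableSet_Ioc).2 (.of_forall hbound))
    _ ≤ K * (t ^ (-α) * (t ^ (β - α - 1 + 1) / (β - α - 1 + 1)) + α *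
          (((2 ^ (- -α) + 1) / (β - α - 1 + 1) + (2 ^ (-(β - α - 1)) + 1) / (-α + 1)) *
            t ^ (β - α - 1 + -α + 1))) := by
        rw [hG, integral_const_mul, integral_add hG1 hG2, integral_const_mul, integral_const_mul,
          setIntegral_sub_rpow_Ioc he ht.le]
        gcongr
        exact setIntegral_rpow_mul_sub_rpow_le he hnegα ht
    _ = K * marchaudConst α β * t ^ (β - 2 * α) := by
        rw [show β - α - 1 + 1 = β - α by ring, show β - α - 1 + -α + 1 = β - 2 * α by ring,
          neg_neg, show -(β - α - 1) = α + 1 - β by ring, show -α + 1 = 1 - α by ring]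
        have e : t ^ (-α) * t ^ (β - α) = t ^ (β - 2 * α) := by rw [← rpow_add ht]; ring_nf
        rw [marchaudConst]
        linear_combination (K / (β - α)) * e

lemma abs_add_mul_marchaudIntegral_le {α β T K t : ℝ} {h : ℝ → ℝ} (hα0 : 0 ≤ α) (hα1 : α < 1)
    (hβ : α < β) (hK : 0 ≤ K) (ht : t ∈ Ioc 0 T) (h0 : h 0 = 0) (hbd : |h t| ≤ K)
    (hHolder : ∀ s ∈ Icc 0 T, ∀ u ∈ Icc 0 T, |h u - h s| ≤ K * |u - s| ^ β) :
    |h t + α * t ^ α * marchaudIntegral α (fun s => s ^ (-α) * h s) t| ≤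
      (1 + α * marchaudConst α β * T ^ (β - α)) * K := by
  obtain ⟨ht, htT⟩ := ht
  have hI := abs_marchaudIntegral_rpow_neg_mul_le hα0 hα1 hβ hK ht h0
    fun s hs u hu => hHolder s ⟨hs.1, hs.2.trans htT⟩ u ⟨hu.1, hu.2.trans htT⟩
  have htα : t ^ α * t ^ (β - 2 * α) = t ^ (β - α) := by rw [← rpow_add ht]; ring_nf
  have hc := marchaudConst_nonneg hα0 hα1 hβ
  calc |h t + α * t ^ α * marchaudIntegral α (fun s => s ^ (-α) * h s) t|
      ≤ |h t| + α * t ^ α * |marchaudIntegral α (fun s => s ^ (-α) * h s) t| := by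
        refine (abs_add_le _ _).trans_eq ?_
        rw [abs_mul, abs_mul, abs_of_nonneg hα0, abs_of_nonneg (rpow_nonneg ht.le _)]
    _ ≤ K + α * t ^ α * (K * marchaudConst α β * t ^ (β - 2 * α)) := by gcongr
    _ = (1 + α * marchaudConst α β * t ^ (β - α)) * K := by rw [← htα]; ring
    _ ≤ (1 + α * marchaudConst α β * T ^ (β - α)) * K := by gcongr

lemma integrableOn_sq_of_abs_le {X : Type*} [MeasurableSpace X] {μ : Measure X} {g : X → ℝ}
    {s : Set X} {B : ℝ} (hs : MeasurableSet s) (hμs : μ s ≠ ⊤)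
    (hg : AEStronglyMeasurable g (μ.restrict s)) (hB : ∀ x ∈ s, |g x| ≤ B) :
    IntegrableOn (fun x => g x ^ 2) s μ :=
  (integrableOn_const hμs (C := B ^ 2)).mono' (hg.pow 2)
    ((ae_restrict_iff' hs).2 (.of_forall fun x hx => by
      rw [norm_pow, norm_eq_abs]; exact pow_le_pow_left₀ (abs_nonneg _) (hB x hx) 2))

lemma setIntegral_sq_le_of_abs_le {X : Type*} [MeasurableSpace X] {μ : Measure X} {g : X → ℝ}
    {s : Set X} {B : ℝ} (hμs : μ s < ⊤) (hB : ∀ x ∈ s, |g x| ≤ B) :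
    ∫ x in s, g x ^ 2 ∂μ ≤ B ^ 2 * μ.real s :=
  (le_abs_self _).trans <| norm_setIntegral_le_of_norm_le_const (f := fun x => g x ^ 2) hμs
    fun x hx => by rw [norm_pow, norm_eq_abs]; exact pow_le_pow_left₀ (abs_nonneg _) (hB x hx) 2

/-- The weighted Riemann–Liouville fractional derivative bound: for `α ∈ (0,1/2)`,
`β > α` and `h ∈ C^β([0,T])` with `h(0) = 0`, the function
`t ↦ t^α (D^α (s^{-α} h))(t) = Γ(1-α)⁻¹ [h_t + α t^α ∫₀^t (t^{-α}h_t - s^{-α}h_s)/(t-s)^{α+1} ds]`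
is square integrable on `(0,T)` with `L²` norm bounded by `C ‖h‖_{C^β}`,
`C = C(α,β,T)`.  Here `Kh` is a bound for the `C^β` norm of `h`. -/
theorem stmt15 (α β T : ℝ) (hα : α ∈ Set.Ioo (0:ℝ) (1/2)) (hβ : α < β) (hT : 0 < T) :
    ∃ C : ℝ, 0 < C ∧
      ∀ (h : ℝ → ℝ) (Kh : ℝ), Continuous h → h 0 = 0 →
      (∀ t ∈ Set.Icc 0 T, |h t| ≤ Kh) →
      (∀ s ∈ Set.Icc 0 T, ∀ t ∈ Set.Icc 0 T, |h t - h s| ≤ Kh * |t - s| ^ β) →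
      MeasureTheory.IntegrableOn
        (fun t => ((Real.Gamma (1 - α))⁻¹ *
          (h t + α * t ^ α *
            ∫ s in Set.Ioc 0 t, (t ^ (-α) * h t - s ^ (-α) * h s) / (t - s) ^ (α + 1))) ^ 2)
        (Set.Ioc 0 T) ∧
      (∫ t in Set.Ioc 0 T, ((Real.Gamma (1 - α))⁻¹ *
          (h t + α * t ^ α *
            ∫ s in Set.Ioc 0 t, (t ^ (-α) * h t - s ^ (-α) * h s) / (t - s) ^ (α + 1))) ^ 2) ≤
        (C * Kh) ^ 2 := by
  obtain ⟨hα0, hα2⟩ := hα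
  have hα1 : α < 1 := by linarith
  have hΓ : 0 < (Gamma (1 - α))⁻¹ := inv_pos.2 (Gamma_pos_of_pos (by linarith))
  have hc := marchaudConst_nonneg hα0.le hα1 hβ
  set M := (Gamma (1 - α))⁻¹ * (1 + α * marchaudConst α β * T ^ (β - α))
  refine ⟨M * √T, by positivity, fun h K hcont h0 hbd hHolder => ?_⟩
  have hK : 0 ≤ K := (abs_nonneg _).trans (hbd 0 ⟨le_rfl, hT.le⟩)
  set g := fun t => (Gamma (1 - α))⁻¹ *
    (h t + α * t ^ α * marchaudIntegral α (fun s => s ^ (-α) * h s) t)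
  have hg : Measurable g := by
    have := (stronglyMeasurable_marchaudIntegral (α := α)
      ((measurable_id.pow_const (-α)).mul hcont.measurable)).measurable
    fun_prop
  have hgK : ∀ t ∈ Ioc 0 T, |g t| ≤ M * K := fun t ht => by
    rw [abs_mul, abs_of_pos hΓ]
    exact (mul_le_mul_of_nonneg_left (abs_add_mul_marchaudIntegral_le hα0.le hα1 hβ hK ht h0
      (hbd t (Ioc_subset_Icc_self ht)) hHolder) hΓ.le).trans_eq (mul_assoc _ _ _).symm
  refine ⟨integrableOn_sq_of_abs_le measurableSet_Ioc measure_Ioc_lt_top.ne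
    hg.aestronglyMeasurable hgK, ?_⟩
  calc ∫ t in Ioc 0 T, g t ^ 2 ≤ (M * K) ^ 2 * volume.real (Ioc 0 T) :=
        setIntegral_sq_le_of_abs_le measure_Ioc_lt_top hgK
    _ = (M * √T * K) ^ 2 := by
        rw [volume_real_Ioc_of_le hT.le, sub_zero]
        linear_combination (-(M * K) ^ 2) * sq_sqrt hT.le
end
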